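/- arXiv:nlin/0102003 — 4 statements merged into one kernel-verified Lean document; each statement's English description precedes it below -/
import Mathlib

section
/- One-soliton verification for the KdV equation with one self-consistent source: u(x,t) = 2k² sech²(θ) and φ₁(x,t) = (1/2)√(2k) sech(θ), with θ = kx − k³t − (α/2)t + x₀, satisfy u_t = −(1/4)(6 u u_x + u_xxx) − 2α ∂_x(φ₁²) and φ₁_xx + (−k² + u)φ₁ = 0. -/
/-!
Both equations are checked along the travelling-wave coordinate `θ = k x - c t + x₀`,
`c = k³ + α / 2`, where they reduce to ordinary differential equations for the profiles
`U = 2k² sech²` and `P = ½ √(2k) sech`. Since `sech' = -sech · tanh` and `tanh' = sech²`,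
differentiating `sechⁿ` and `sechⁿ · tanh` stays among expressions of the same two shapes once
`tanh² = 1 - sech²` is used, so both ODEs become polynomial identities in `sech` and `tanh`.
-/

open Real

namespace Real

noncomputable def sech (x : ℝ) : ℝ := 1 / cosh x

theorem sech_sq_add_tanh_sq (x : ℝ) : sech x ^ 2 + tanh x ^ 2 = 1 := by
  have := (cosh_pos x).ne'
  rw [sech, tanh_eq_sinh_div_cosh]
  field_simp
  linear_combination (cosh_sq x).symm

theorem hasDerivAt_sech (x : ℝ) : HasDerivAt sech (-(sech x * tanh x)) x := by
  have hc := (cosh_pos x).ne'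
  have h := (hasDerivAt_cosh x).fun_inv hc
  rw [show (fun y => (cosh y)⁻¹) = sech from funext fun y => (one_div _).symm] at h
  refine h.congr_deriv ?_
  rw [sech, tanh_eq_sinh_div_cosh]
  field_simp

theorem hasDerivAt_tanh (x : ℝ) : HasDerivAt tanh (sech x ^ 2) x := by
  have hc := (cosh_pos x).ne'
  have h := (hasDerivAt_sinh x).fun_div (hasDerivAt_cosh x) hc
  rw [show (fun y => sinh y / cosh y) = tanh from funext fun y => (tanh_eq_sinh_div_cosh y).symm]
    at h
  refine h.congr_deriv ?_
  rw [sech]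
  field_simp
  linear_combination cosh_sq x

theorem hasDerivAt_sech_pow (n : ℕ) (x : ℝ) :
    HasDerivAt (fun x => sech x ^ n) (-(n * sech x ^ n * tanh x)) x := by
  refine ((hasDerivAt_sech x).fun_pow n).congr_deriv ?_
  rcases n with _ | n
  · simp
  · simp only [Nat.add_sub_cancel, pow_succ]
    ring

theorem hasDerivAt_sech_pow_mul_tanh (n : ℕ) (x : ℝ) :
    HasDerivAt (fun x => sech x ^ n * tanh x)
      ((n + 1) * sech x ^ (n + 2) - n * sech x ^ n) x := by
  refine ((hasDerivAt_sech_pow n x).mul (hasDerivAt_tanh x)).congr_deriv ?_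
  linear_combination (-(n * sech x ^ n)) * sech_sq_add_tanh_sq x

end Real

theorem deriv_comp_mul_add (g : ℝ → ℝ) (a b x : ℝ) :
    deriv (fun y => g (a * y + b)) x = a * deriv g (a * x + b) := by
  rw [deriv_comp_mul_left a (fun z => g (z + b)), deriv_comp_add_const, smul_eq_mul]

theorem iterate_deriv_comp_mul_add (g : ℝ → ℝ) (a b : ℝ) (n : ℕ) :
    deriv^[n] (fun y => g (a * y + b)) = fun y => a ^ n * deriv^[n] g (a * y + b) := by
  induction n with
  | zero => simp
  | succ n ih =>
    rw [Function.iterate_succ_apply', ih, deriv_const_mul_field']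
    ext y
    rw [deriv_comp_mul_add, Function.iterate_succ_apply', pow_succ, mul_assoc]

section TravelingWave

variable (g : ℝ → ℝ) (k c b x t : ℝ)

theorem iterate_deriv_travelingWave_space (n : ℕ) :
    deriv^[n] (fun y => g (k * y - c * t + b)) x = k ^ n * deriv^[n] g (k * x - c * t + b) := by
  rw [show (fun y => g (k * y - c * t + b)) = fun y => g (k * y + (b - c * t)) by ext; ring_nf,
    iterate_deriv_comp_mul_add]
  beta_reduce
  rw [show k * x + (b - c * t) = k * x - c * t + b by ring]

theorem deriv_travelingWave_space :
    deriv (fun y => g (k * y - c * t + b)) x = k * deriv g (k * x - c * t + b) := by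
  simpa using iterate_deriv_travelingWave_space g k c b x t 1

theorem deriv_travelingWave_time :
    deriv (fun s => g (k * x - c * s + b)) t = -c * deriv g (k * x - c * t + b) := by
  rw [show (fun s => g (k * x - c * s + b)) = fun s => g (-c * s + (k * x + b)) by ext; ring_nf,
    deriv_comp_mul_add, show -c * t + (k * x + b) = k * x - c * t + b by ring]

end TravelingWave

theorem kdv_source_of_travelingWave {U P : ℝ → ℝ} {k c α : ℝ}
    (hode : ∀ z, -c * deriv U z = -(1 / 4) * (6 * k * U z * deriv U z + k ^ 3 * deriv^[3] U z)
      - 2 * α * k * deriv (fun z => P z ^ 2) z) (b x t : ℝ) :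
    deriv (fun s => U (k * x - c * s + b)) t
      = -(1 / 4) * (6 * U (k * x - c * t + b) * deriv (fun y => U (k * y - c * t + b)) x
          + deriv (deriv (deriv (fun y => U (k * y - c * t + b)))) x)
        - 2 * α * deriv (fun y => P (k * y - c * t + b) ^ 2) x := by
  rw [deriv_travelingWave_time, deriv_travelingWave_space,
    show deriv (deriv (deriv _)) = deriv^[3] _ from rfl, iterate_deriv_travelingWave_space,
    deriv_travelingWave_space (fun z => P z ^ 2), hode]
  ring

theorem schrodinger_of_travelingWave {U P : ℝ → ℝ} {k μ : ℝ}
    (hode : ∀ z, k ^ 2 * deriv^[2] P z + (μ + U z) * P z = 0) (c b x t : ℝ) :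
    deriv (deriv (fun y => P (k * y - c * t + b))) x
      + (μ + U (k * x - c * t + b)) * P (k * x - c * t + b) = 0 := by
  rw [show deriv (deriv _) = deriv^[2] _ from rfl, iterate_deriv_travelingWave_space]
  exact hode _

theorem sech_sq_kdv_source_ode (k α A : ℝ) (hA : A ^ 2 = k / 2) (z : ℝ) :
    -(k ^ 3 + α / 2) * deriv (fun z => 2 * k ^ 2 * sech z ^ 2) z
      = -(1 / 4) * (6 * k * (2 * k ^ 2 * sech z ^ 2) * deriv (fun z => 2 * k ^ 2 * sech z ^ 2) z
          + k ^ 3 * deriv^[3] (fun z => 2 * k ^ 2 * sech z ^ 2) z)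
        - 2 * α * k * deriv (fun z => (A * sech z) ^ 2) z := by
  have d1 : deriv (fun z => 2 * k ^ 2 * sech z ^ 2) = fun z => -4 * k ^ 2 * (sech z ^ 2 * tanh z) :=
    funext fun z => ((hasDerivAt_sech_pow 2 z).const_mul _).deriv.trans (by push_cast; ring)
  have d2 : deriv (fun z => -4 * k ^ 2 * (sech z ^ 2 * tanh z))
      = fun z => -4 * k ^ 2 * (3 * sech z ^ 4 - 2 * sech z ^ 2) :=
    funext fun z => ((hasDerivAt_sech_pow_mul_tanh 2 z).const_mul _).deriv.trans
      (by push_cast; ring)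
  have d3 : deriv (fun z => -4 * k ^ 2 * (3 * sech z ^ 4 - 2 * sech z ^ 2)) z
      = -4 * k ^ 2 * (-12 * sech z ^ 4 * tanh z + 4 * sech z ^ 2 * tanh z) :=
    ((((hasDerivAt_sech_pow 4 z).const_mul 3).sub
      ((hasDerivAt_sech_pow 2 z).const_mul 2)).const_mul _).deriv.trans (by push_cast; ring)
  have dP : deriv (fun z => (A * sech z) ^ 2) z = -k * (sech z ^ 2 * tanh z) := by
    rw [show (fun z => (A * sech z) ^ 2) = fun z => k / 2 * sech z ^ 2 by
      ext z; linear_combination sech z ^ 2 * hA]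
    exact ((hasDerivAt_sech_pow 2 z).const_mul _).deriv.trans (by push_cast; ring)
  rw [show deriv^[3] _ = deriv (deriv (deriv _)) from rfl, d1, d2, d3, dP]
  ring

theorem sech_schrodinger_ode (k A z : ℝ) :
    k ^ 2 * deriv^[2] (fun z => A * sech z) z + (-k ^ 2 + 2 * k ^ 2 * sech z ^ 2) * (A * sech z)
      = 0 := by
  have d1 : deriv (fun z => A * sech z) = fun z => -A * (sech z ^ 1 * tanh z) :=
    funext fun z => ((hasDerivAt_sech z).const_mul _).deriv.trans (by ring)
  have d2 : deriv (fun z => -A * (sech z ^ 1 * tanh z)) z = -A * (2 * sech z ^ 3 - sech z) :=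
    ((hasDerivAt_sech_pow_mul_tanh 1 z).const_mul _).deriv.trans (by push_cast; ring)
  rw [show deriv^[2] _ = deriv (deriv _) from rfl, d1, d2]
  ring
/-- One-soliton verification for the KdV equation with one self-consistent source. -/
theorem kdv_one_soliton_with_source
    (k α x₀ : ℝ) (hk : 0 < k)
    (θ u φ : ℝ → ℝ → ℝ)
    (hθ : θ = fun x t => k * x - k ^ 3 * t - (α / 2) * t + x₀)
    (hu : u = fun x t => 2 * k ^ 2 * (1 / Real.cosh (θ x t)) ^ 2)
    (hφ : φ = fun x t => (1 / 2) * Real.sqrt (2 * k) * (1 / Real.cosh (θ x t))) :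
    (∀ x t, deriv (fun s => u x s) t
      = -(1 / 4) * (6 * u x t * deriv (fun y => u y t) x
          + deriv (deriv (deriv (fun y => u y t))) x)
        - 2 * α * deriv (fun y => (φ y t) ^ 2) x) ∧
    (∀ x t, deriv (deriv (fun y => φ y t)) x + (-(k ^ 2) + u x t) * φ x t = 0) := by
  have hA : (1 / 2 * √(2 * k)) ^ 2 = k / 2 := by
    rw [mul_pow, Real.sq_sqrt (by linarith)]
    ring
  obtain rfl : θ = fun x t => k * x - (k ^ 3 + α / 2) * t + x₀ := by
    rw [hθ]
    ext x t
    ring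
  subst hu hφ
  exact ⟨kdv_source_of_travelingWave (sech_sq_kdv_source_ode k α _ hA) x₀,
    schrodinger_of_travelingWave (sech_schrodinger_ode k _) _ x₀⟩
end

section
/- Source-antiderivative identity for the first binary Darboux transformation: if F' = f², Q' = fφ_j, R' = fψ, and φ̄_j = φ_j − (f/F)Q, ψ̄ = ψ − (f/F)R, and K' = φ_jψ, then d/dx [K − QR/F] = φ̄_j · ψ̄. -/
/-- Source-antiderivative identity for the first binary Darboux transformation. -/
theorem first_binary_darboux_source_identity
    (f φj ψ F Q R K : ℝ → ℝ)
    (hf : ContDiff ℝ (⊤ : ℕ∞) f) (hφj : ContDiff ℝ (⊤ : ℕ∞) φj) (hψ : ContDiff ℝ (⊤ : ℕ∞) ψ)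
    (hF : ContDiff ℝ (⊤ : ℕ∞) F) (hQ : ContDiff ℝ (⊤ : ℕ∞) Q) (hR : ContDiff ℝ (⊤ : ℕ∞) R)
    (hK : ContDiff ℝ (⊤ : ℕ∞) K)
    (hF' : ∀ x, deriv F x = f x ^ 2)
    (hQ' : ∀ x, deriv Q x = f x * φj x)
    (hR' : ∀ x, deriv R x = f x * ψ x)
    (hK' : ∀ x, deriv K x = φj x * ψ x)
    (hFne : ∀ x, F x ≠ 0)
    (φb ψb : ℝ → ℝ)
    (hφb : φb = fun x => φj x - (f x / F x) * Q x)
    (hψb : ψb = fun x => ψ x - (f x / F x) * R x) :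
    ∀ x, deriv (fun y => K y - Q y * R y / F y) x = φb x * ψb x := by
  intro x
  have dK : DifferentiableAt ℝ K x := (hK.differentiable (by simp)) x
  have dQ : DifferentiableAt ℝ Q x := (hQ.differentiable (by simp)) x
  have dR : DifferentiableAt ℝ R x := (hR.differentiable (by simp)) x
  have dF : DifferentiableAt ℝ F x := (hF.differentiable (by simp)) x
  have h : deriv (fun y => K y - Q y * R y / F y) x
      = deriv K x - ((deriv Q x * R x + Q x * deriv R x) * F x - Q x * R x * deriv F x) / (F x)^2 := by
    rw [deriv_fun_sub dK ((dQ.fun_mul dR).fun_div dF (hFne x)), deriv_fun_div (dQ.fun_mul dR) dF (hFne x),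
      deriv_fun_mul dQ dR]
  rw [h, hK', hQ', hR', hF', hφb, hψb]
  have h0 := hFne x
  field_simp
  ring
end

section
/- Two-by-two Wronskian reduction (Lemma 5.1 for k=1): with a_{ij} = ∂^{-1}(f_i f_j) and f₂[1] = f₂ − (f₁/(1+a_{11}))a_{12}, one has 1 + ∂^{-1}(f₂[1]²) = W₁(f₁,f₂)/(1 + a_{11}), where W₁(f₁,f₂) = (1+a_{11})(1+a_{22}) − a_{12}a_{21} and a_{12} = a_{21}. -/
/-- Two-by-two Wronskian reduction (Lemma 5.1 for k = 1). -/
theorem two_by_two_wronskian_reduction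
    (f₁ f₂ a₁₁ a₁₂ a₂₂ : ℝ → ℝ)
    (hf₁ : ContDiff ℝ (⊤ : ℕ∞) f₁) (hf₂ : ContDiff ℝ (⊤ : ℕ∞) f₂)
    (ha₁₁ : ContDiff ℝ (⊤ : ℕ∞) a₁₁) (ha₁₂ : ContDiff ℝ (⊤ : ℕ∞) a₁₂) (ha₂₂ : ContDiff ℝ (⊤ : ℕ∞) a₂₂)
    (ha₁₁' : ∀ x, deriv a₁₁ x = f₁ x * f₁ x)
    (ha₁₂' : ∀ x, deriv a₁₂ x = f₁ x * f₂ x)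
    (ha₂₂' : ∀ x, deriv a₂₂ x = f₂ x * f₂ x)
    (hpos : ∀ x, 0 < 1 + a₁₁ x)
    (g : ℝ → ℝ)
    (hg : g = fun x => f₂ x - (f₁ x / (1 + a₁₁ x)) * a₁₂ x) :
    ∀ x, deriv (fun y =>
        ((1 + a₁₁ y) * (1 + a₂₂ y) - (a₁₂ y) ^ 2) / (1 + a₁₁ y)) x
      = g x ^ 2 := by
  intro x
  have hD : (1 : ℝ) + a₁₁ x ≠ 0 := (hpos x).ne'
  have h11 : HasDerivAt a₁₁ (f₁ x * f₁ x) x := by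
    have := ((ha₁₁.differentiable (by simp)) x).hasDerivAt
    rwa [ha₁₁' x] at this
  have h12 : HasDerivAt a₁₂ (f₁ x * f₂ x) x := by
    have := ((ha₁₂.differentiable (by simp)) x).hasDerivAt
    rwa [ha₁₂' x] at this
  have h22 : HasDerivAt a₂₂ (f₂ x * f₂ x) x := by
    have := ((ha₂₂.differentiable (by simp)) x).hasDerivAt
    rwa [ha₂₂' x] at this
  have hDen : HasDerivAt (fun y => 1 + a₁₁ y) (f₁ x * f₁ x) x := h11.const_add 1
  have hNum : HasDerivAt (fun y => (1 + a₁₁ y) * (1 + a₂₂ y) - (a₁₂ y) ^ 2)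
      ((f₁ x * f₁ x) * (1 + a₂₂ x) + (1 + a₁₁ x) * (f₂ x * f₂ x)
        - 2 * a₁₂ x * (f₁ x * f₂ x)) x := by
    have : HasDerivAt (fun y => (1 + a₁₁ y) * (1 + a₂₂ y) - (a₁₂ y) ^ 2) _ x :=
      (hDen.mul (h22.const_add 1)).sub (h12.pow 2)
    convert this using 1
    norm_num
  have hq : HasDerivAt (fun y => ((1 + a₁₁ y) * (1 + a₂₂ y) - (a₁₂ y) ^ 2) / (1 + a₁₁ y)) _ x :=
    hNum.div hDen hD
  rw [hq.deriv, hg]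
  field_simp
  ring
end

section
/- Two-fold Darboux (Crum) covariance: if f₁, f₂ solve f_i'' + (ξ_i + u)f_i = 0 with ξ₁ ≠ ξ₂ and the Wronskian W = f₁f₂' − f₁'f₂ is nonvanishing, then for any solution φ of φ'' + (λ+u)φ = 0, the function φ[2] = W(f₁,f₂,φ)/W(f₁,f₂) satisfies φ[2]'' + (λ + u[2])φ[2] = 0, where u[2] = u + 2(ln W(f₁,f₂))'' and W(f₁,f₂,φ) is the 3×3 Wronskian determinant. -/
/-- Two-fold Darboux (Crum) covariance. -/
theorem crum_two_fold_darboux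
    (u f₁ f₂ φ : ℝ → ℝ) (ξ₁ ξ₂ lam : ℝ) (hξ : ξ₁ ≠ ξ₂)
    (hu : ContDiff ℝ (⊤ : ℕ∞) u) (hf₁ : ContDiff ℝ (⊤ : ℕ∞) f₁) (hf₂ : ContDiff ℝ (⊤ : ℕ∞) f₂)
    (hφ : ContDiff ℝ (⊤ : ℕ∞) φ)
    (hf₁eq : ∀ x, deriv (deriv f₁) x + (ξ₁ + u x) * f₁ x = 0)
    (hf₂eq : ∀ x, deriv (deriv f₂) x + (ξ₂ + u x) * f₂ x = 0)
    (hφeq : ∀ x, deriv (deriv φ) x + (lam + u x) * φ x = 0)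
    (W₂ W₃ : ℝ → ℝ)
    (hW₂ : W₂ = fun x => f₁ x * deriv f₂ x - deriv f₁ x * f₂ x)
    (hW₃ : W₃ = fun x => (Matrix.of
      ![![f₁ x, f₂ x, φ x],
        ![deriv f₁ x, deriv f₂ x, deriv φ x],
        ![deriv (deriv f₁) x, deriv (deriv f₂) x, deriv (deriv φ) x]]).det)
    (hWne : ∀ x, W₂ x ≠ 0)
    (u₂ φ₂ : ℝ → ℝ)
    (hu₂ : u₂ = fun x => u x + 2 * deriv (deriv (fun y => Real.log |W₂ y|)) x)
    (hφ₂ : φ₂ = fun x => W₃ x / W₂ x) :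
    ∀ x, deriv (deriv φ₂) x + (lam + u₂ x) * φ₂ x = 0 := by
  have hf₁d : Differentiable ℝ f₁ := hf₁.differentiable (by simp)
  have hf₂d : Differentiable ℝ f₂ := hf₂.differentiable (by simp)
  have hφd : Differentiable ℝ φ := hφ.differentiable (by simp)
  have hf₁i : ContDiff ℝ ((⊤ : ℕ∞) : WithTop ℕ∞) f₁ := hf₁.of_le (by simp)
  have hf₂i : ContDiff ℝ ((⊤ : ℕ∞) : WithTop ℕ∞) f₂ := hf₂.of_le (by simp)
  have hφi : ContDiff ℝ ((⊤ : ℕ∞) : WithTop ℕ∞) φ := hφ.of_le (by simp)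
  have hf₁'d : Differentiable ℝ (deriv f₁) :=
    ((contDiff_infty_iff_deriv.mp hf₁i).2).differentiable (by simp)
  have hf₂'d : Differentiable ℝ (deriv f₂) :=
    ((contDiff_infty_iff_deriv.mp hf₂i).2).differentiable (by simp)
  have hφ'd : Differentiable ℝ (deriv φ) :=
    ((contDiff_infty_iff_deriv.mp hφi).2).differentiable (by simp)
  have H1 : ∀ x, HasDerivAt f₁ (deriv f₁ x) x := fun x => (hf₁d x).hasDerivAt
  have H2 : ∀ x, HasDerivAt f₂ (deriv f₂ x) x := fun x => (hf₂d x).hasDerivAt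
  have Hp : ∀ x, HasDerivAt φ (deriv φ x) x := fun x => (hφd x).hasDerivAt
  have H1' : ∀ x, HasDerivAt (deriv f₁) (deriv (deriv f₁) x) x := fun x => (hf₁'d x).hasDerivAt
  have H2' : ∀ x, HasDerivAt (deriv f₂) (deriv (deriv f₂) x) x := fun x => (hf₂'d x).hasDerivAt
  have Hp' : ∀ x, HasDerivAt (deriv φ) (deriv (deriv φ) x) x := fun x => (hφ'd x).hasDerivAt
  have e1 : ∀ x, deriv (deriv f₁) x = -(ξ₁ + u x) * f₁ x := fun x => by linarith [hf₁eq x]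
  have e2 : ∀ x, deriv (deriv f₂) x = -(ξ₂ + u x) * f₂ x := fun x => by linarith [hf₂eq x]
  have ep : ∀ x, deriv (deriv φ) x = -(lam + u x) * φ x := fun x => by linarith [hφeq x]
  -- auxiliary Wronskians
  set wp1 : ℝ → ℝ := fun x => f₁ x * deriv φ x - deriv f₁ x * φ x with hwp1
  set wp2 : ℝ → ℝ := fun x => f₂ x * deriv φ x - deriv f₂ x * φ x with hwp2
  have Hwp1 : ∀ x, HasDerivAt wp1 ((ξ₁ - lam) * (f₁ x * φ x)) x := by
    intro x
    have h := ((H1 x).fun_mul (Hp' x)).fun_sub ((H1' x).fun_mul (Hp x))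
    rw [hwp1]
    refine h.congr_deriv ?_
    rw [e1 x, ep x]; ring
  have Hwp2 : ∀ x, HasDerivAt wp2 ((ξ₂ - lam) * (f₂ x * φ x)) x := by
    intro x
    have h := ((H2 x).fun_mul (Hp' x)).fun_sub ((H2' x).fun_mul (Hp x))
    rw [hwp2]
    refine h.congr_deriv ?_
    rw [e2 x, ep x]; ring
  have HW2 : ∀ x, HasDerivAt W₂ ((ξ₁ - ξ₂) * (f₁ x * f₂ x)) x := by
    intro x
    have h := ((H1 x).fun_mul (H2' x)).fun_sub ((H1' x).fun_mul (H2 x))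
    rw [hW₂]
    refine h.congr_deriv ?_
    rw [e1 x, e2 x]; ring
  -- B = deriv W₂ , Bd its derivative value
  set B : ℝ → ℝ := fun x => (ξ₁ - ξ₂) * (f₁ x * f₂ x) with hB
  have dW2fun : deriv W₂ = B := funext fun x => (HW2 x).deriv
  have HB : ∀ x, HasDerivAt B ((ξ₁ - ξ₂) * (deriv f₁ x * f₂ x + f₁ x * deriv f₂ x)) x := by
    intro x
    rw [hB]
    exact ((H1 x).mul (H2 x)).const_mul (ξ₁ - ξ₂)
  -- explicit form of W₃
  have hW₃f : W₃ = fun x => -ξ₁ * (f₁ x * wp2 x) + ξ₂ * (f₂ x * wp1 x) - lam * (φ x * W₂ x) := by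
    funext x
    rw [hW₃, hW₂, hwp1, hwp2]
    simp [Matrix.det_fin_three]
    rw [e1 x, e2 x, ep x]; ring
  -- A = deriv W₃
  set A : ℝ → ℝ := fun x =>
      -ξ₁ * (deriv f₁ x * wp2 x) + ξ₂ * (deriv f₂ x * wp1 x) - lam * (deriv φ x * W₂ x) with hA
  have HW3 : ∀ x, HasDerivAt W₃ (A x) x := by
    intro x
    have h := ((((H1 x).fun_mul (Hwp2 x)).const_mul (-ξ₁)).fun_add
        (((H2 x).fun_mul (Hwp1 x)).const_mul ξ₂)).fun_sub (((Hp x).fun_mul (HW2 x)).const_mul lam)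
    rw [hW₃f, hA]
    refine h.congr_deriv ?_
    ring
  have dW3fun : deriv W₃ = A := funext fun x => (HW3 x).deriv
  -- C = deriv A
  set C : ℝ → ℝ := fun x =>
      -ξ₁ * ((-(ξ₁ + u x) * f₁ x) * wp2 x + deriv f₁ x * ((ξ₂ - lam) * (f₂ x * φ x)))
      + ξ₂ * ((-(ξ₂ + u x) * f₂ x) * wp1 x + deriv f₂ x * ((ξ₁ - lam) * (f₁ x * φ x)))
      - lam * ((-(lam + u x) * φ x) * W₂ x + deriv φ x * ((ξ₁ - ξ₂) * (f₁ x * f₂ x))) with hC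
  have HA : ∀ x, HasDerivAt A (C x) x := by
    intro x
    have h := ((((H1' x).fun_mul (Hwp2 x)).const_mul (-ξ₁)).fun_add
        (((H2' x).fun_mul (Hwp1 x)).const_mul ξ₂)).fun_sub (((Hp' x).fun_mul (HW2 x)).const_mul lam)
    rw [hA, hC]
    refine h.congr_deriv ?_
    rw [e1 x, e2 x, ep x]
    try ring
  -- first derivative of φ₂
  have HP1 : ∀ x, HasDerivAt φ₂ ((A x * W₂ x - W₃ x * B x) / (W₂ x) ^ 2) x := by
    intro x
    rw [hφ₂]
    have h := (HW3 x).div (HW2 x) (hWne x)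
    rw [hB]
    exact h
  have dP1fun : deriv φ₂ = fun x => (A x * W₂ x - W₃ x * B x) / (W₂ x) ^ 2 :=
    funext fun x => (HP1 x).deriv
  -- second derivative of φ₂
  have HP2 : ∀ x, deriv (deriv φ₂) x =
      ((C x * W₂ x - W₃ x * ((ξ₁ - ξ₂) * (deriv f₁ x * f₂ x + f₁ x * deriv f₂ x))) * (W₂ x) ^ 2
        - (A x * W₂ x - W₃ x * B x) * (2 * W₂ x * B x)) / ((W₂ x) ^ 2) ^ 2 := by
    intro x
    have hnum : HasDerivAt (fun x => A x * W₂ x - W₃ x * B x)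
        (C x * W₂ x + A x * B x -
          (A x * B x + W₃ x * ((ξ₁ - ξ₂) * (deriv f₁ x * f₂ x + f₁ x * deriv f₂ x)))) x :=
      ((HA x).mul (HW2 x)).sub ((HW3 x).mul (HB x))
    have hden : HasDerivAt (fun x => (W₂ x) ^ 2) (2 * W₂ x * B x) x := by
      have h := (HW2 x).fun_pow 2
      refine h.congr_deriv ?_
      rw [hB]; ring
    have h := hnum.fun_div hden (pow_ne_zero 2 (hWne x))
    rw [dP1fun, h.deriv]
    ring
  -- the log term
  have hlog : (fun y => Real.log |W₂ y|) = fun y => Real.log (W₂ y) :=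
    funext fun y => Real.log_abs (W₂ y)
  have HL : ∀ x, HasDerivAt (fun y => Real.log (W₂ y)) (B x / W₂ x) x := by
    intro x
    have h := (HW2 x).log (hWne x)
    rw [hB]
    exact h
  have dLfun : deriv (fun y => Real.log (W₂ y)) = fun x => B x / W₂ x :=
    funext fun x => (HL x).deriv
  have HL2 : ∀ x, deriv (deriv (fun y => Real.log |W₂ y|)) x =
      (((ξ₁ - ξ₂) * (deriv f₁ x * f₂ x + f₁ x * deriv f₂ x)) * W₂ x - B x * B x) / (W₂ x) ^ 2 := by
    intro x
    rw [hlog, dLfun]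
    have h := (HB x).fun_div (HW2 x) (hWne x)
    rw [h.deriv, hB]
  -- conclude
  intro x
  rw [HP2 x, hu₂, hφ₂]
  simp only
  rw [HL2 x]
  have hw : W₂ x = f₁ x * deriv f₂ x - deriv f₁ x * f₂ x := by rw [hW₂]
  have hw3 : W₃ x = -ξ₁ * (f₁ x * wp2 x) + ξ₂ * (f₂ x * wp1 x) - lam * (φ x * W₂ x) := by
    rw [hW₃f]
  rw [hA, hB, hC, hw3, hwp1, hwp2]
  simp only
  rw [hw]
  have hne : f₁ x * deriv f₂ x - deriv f₁ x * f₂ x ≠ 0 := by rw [← hw]; exact hWne x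
  generalize hd : f₁ x * deriv f₂ x - deriv f₁ x * f₂ x = d at hne ⊢
  field_simp
  subst hd
  ring
end
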